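/- arXiv:2406.02191 — 6 statements merged into one kernel-verified Lean document; each statement's English description precedes it below -/
import Mathlib

section
/- If Y-bar = sum_{i=1}^k f(X_i) + sum_{i=1}^k N_i where the N_i are integrable random variables independent of (X_1,...,X_k), and Y-bar can also be written as Y-bar = g(X-bar) + N with X-bar = sum_{i=1}^k X_i and N integrable and independent of X-bar, then g(T) = E[sum_{i=1}^k f(X_i) | X-bar = T] + c almost surely for some constant c. -/
/-!
Condition both decompositions of `Ybar` on `σ(Xbar)`: `g(Xbar)` is `σ(Xbar)`-measurable, so it is
its own conditional expectation, while the noises `∑ N i` and `N'`, being independent of `Xbar`,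
have constant conditional expectations equal to their means.
-/

open MeasureTheory ProbabilityTheory

namespace MeasureTheory

variable {Ω : Type*} {mΩ : MeasurableSpace Ω} {μ : Measure Ω}

theorem condExp_comap_ae_eq_integral_of_indepFun [IsFiniteMeasure μ]
    {E β : Type*} [NormedAddCommGroup E] [NormedSpace ℝ E] [CompleteSpace E]
    [MeasurableSpace E] [BorelSpace E] [SecondCountableTopology E] [MeasurableSpace β]
    {V : Ω → E} {Z : Ω → β} (hV : Measurable V) (hZ : Measurable Z) (h : IndepFun V Z μ) :
    μ[V | MeasurableSpace.comap Z inferInstance] =ᵐ[μ] fun _ => μ[V] :=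
  condExp_indep_eq hV.comap_le hZ.comap_le (comap_measurable V).stronglyMeasurable h

theorem ae_eq_condExp_add_const_of_add_eq_add {m : MeasurableSpace Ω} (hm : m ≤ mΩ)
    [SigmaFinite (μ.trim hm)] {U V W V' : Ω → ℝ} {a b : ℝ}
    (hU : Integrable U μ) (hV : Integrable V μ) (hV' : Integrable V' μ)
    (hW : StronglyMeasurable[m] W) (hUV : U + V = W + V')
    (hVa : μ[V|m] =ᵐ[μ] fun _ => a) (hV'b : μ[V'|m] =ᵐ[μ] fun _ => b) :
    W =ᵐ[μ] fun ω => μ[U|m] ω + (a - b) := by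
  have hWint : Integrable W μ := by
    have hW_eq : W = U + V - V' := by rw [hUV, add_sub_cancel_right]
    exact hW_eq ▸ (hU.add hV).sub hV'
  have hcond : μ[U|m] + μ[V|m] =ᵐ[μ] W + μ[V'|m] := by
    calc μ[U|m] + μ[V|m] =ᵐ[μ] μ[U + V|m] := (condExp_add hU hV m).symm
      _ = μ[W + V'|m] := by rw [hUV]
      _ =ᵐ[μ] μ[W|m] + μ[V'|m] := condExp_add hWint hV' m
      _ = W + μ[V'|m] := by rw [condExp_of_stronglyMeasurable hm hW hWint]
  filter_upwards [hcond, hVa, hV'b] with ω hω hωa hωb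
  simp only [Pi.add_apply, hωa, hωb] at hω
  linarith

end MeasureTheory

/-- If `Ybar = ∑ f (X i) + ∑ N i` with the noises `N` (jointly) independent of
the vector `X`, and also `Ybar = g ∘ Xbar + N'` with `N'` integrable and independent of
`Xbar = ∑ X i`, then `g(T) = E[∑ f(X i) | Xbar = T] + c` almost surely, where the constant
`c` equals `E[∑ N i] - E[N']`. -/
theorem stmt0 {Ω : Type*} [MeasurableSpace Ω] (μ : Measure Ω) [IsProbabilityMeasure μ]
    (k : ℕ) (X N : Fin k → Ω → ℝ) (f g : ℝ → ℝ) (Ybar N' : Ω → ℝ)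
    (hXmeas : ∀ i, Measurable (X i)) (hNmeas : ∀ i, Measurable (N i))
    (hgmeas : Measurable g) (hN'meas : Measurable N')
    (hfXint : ∀ i, Integrable (fun ω => f (X i ω)) μ)
    (hNint : ∀ i, Integrable (N i) μ) (hN'int : Integrable N' μ)
    (hindep : IndepFun (fun ω => (fun i => N i ω)) (fun ω => (fun i => X i ω)) μ)
    (hindep' : IndepFun N' (fun ω => ∑ i, X i ω) μ)
    (hY1 : ∀ ω, Ybar ω = (∑ i, f (X i ω)) + ∑ i, N i ω)
    (hY2 : ∀ ω, Ybar ω = g (∑ i, X i ω) + N' ω) :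
    (fun ω => g (∑ i, X i ω)) =ᵐ[μ]
      (fun ω =>
        (μ[(fun ω' => ∑ i, f (X i ω')) |
          MeasurableSpace.comap (fun ω' => ∑ i, X i ω') Real.measurableSpace]) ω
        + ((∫ ω', ∑ i, N i ω' ∂μ) - ∫ ω', N' ω' ∂μ)) := by
  have hsum : Measurable fun v : Fin k → ℝ => ∑ i, v i :=
    Finset.measurable_sum _ fun i _ => measurable_pi_apply i
  have hXbar : Measurable fun ω => ∑ i, X i ω := Finset.measurable_sum _ fun i _ => hXmeas i
  have hsumN_indep : IndepFun (fun ω => ∑ i, N i ω) (fun ω => ∑ i, X i ω) μ :=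
    hindep.comp hsum hsum
  exact ae_eq_condExp_add_const_of_add_eq_add hXbar.comap_le
    (integrable_finsetSum _ fun i _ => hfXint i) (integrable_finsetSum _ fun i _ => hNint i)
    hN'int (hgmeas.comp (comap_measurable _)).stronglyMeasurable
    (funext fun ω => (hY1 ω).symm.trans (hY2 ω))
    (condExp_comap_ae_eq_integral_of_indepFun (Finset.measurable_sum _ fun i _ => hNmeas i)
      hXbar hsumN_indep)
    (condExp_comap_ae_eq_integral_of_indepFun hN'meas hXbar hindep')
end

section
/- Let (X_1,...,X_k, Y_1,...,Y_k, Z_1,...,Z_k) satisfy: (X's) ⫫ (Z's) | (Y's). If S_Z is conditionally independent of (Y_1,...,Y_k) given S_Y, then S_X ⫫ S_Z | S_Y. -/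
/-!
Condition first on the whole vector `Y`. Since `S_X` and `S_Z` are functions of the `X`'s and
the `Z`'s, they are independent given `σ(Y)`. The extra hypothesis `S_Z ⫫ Y | S_Y` says that
`P(S_Z ∈ B | σ(Y)) = P(S_Z ∈ B | S_Y)`, i.e. this conditional probability is already
`σ(S_Y)`-measurable. Taking `E[· | S_Y]` of `P(S_X ∈ A, S_Z ∈ B | σ(Y))`
`= P(S_X ∈ A | σ(Y)) P(S_Z ∈ B | S_Y)` and pulling out the second factor gives the product
formula for `S_X ⫫ S_Z | S_Y`.
-/

open MeasureTheory ProbabilityTheory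

section CondIndep

variable {Ω : Type*} {m m₁ m₂ m₃ mΩ : MeasurableSpace Ω} {μ : Measure Ω}

lemma ae_norm_condExp_indicator_le_one (s : Set Ω) : ∀ᵐ ω ∂μ, ‖(μ⟦s | m⟧) ω‖ ≤ 1 :=
  ae_bdd_norm_condExp_of_ae_bdd_norm <| ae_of_all _ fun _ =>
    (norm_indicator_le_norm_self _ _).trans norm_one.le

variable [IsFiniteMeasure μ] [StandardBorelSpace Ω]

lemma condExp_indicator_eq_of_condIndep {hm : m ≤ mΩ} (hle : m ≤ m₂) (hm₁ : m₁ ≤ mΩ)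
    (hm₂ : m₂ ≤ mΩ) (h : CondIndep m m₁ m₂ hm μ) {s : Set Ω} (hs : MeasurableSet[m₁] s) :
    μ⟦s | m₂⟧ =ᵐ[μ] μ⟦s | m⟧ := by
  have hs' : MeasurableSet[mΩ] s := hm₁ s hs
  refine (ae_eq_condExp_of_forall_setIntegral_eq hm₂ ((integrable_const 1).indicator hs')
    (fun _ _ _ => integrable_condExp.integrableOn) (fun t ht _ => ?_)
    (stronglyMeasurable_condExp.aestronglyMeasurable.mono hle)).symm
  have ht' : MeasurableSet[mΩ] t := hm₂ t ht
  calc ∫ ω in t, (μ⟦s | m⟧) ω ∂μ = ∫ ω, (μ⟦s | m⟧ * t.indicator fun _ => (1 : ℝ)) ω ∂μ := by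
        rw [← integral_indicator ht']
        congr 1 with ω
        by_cases hω : ω ∈ t <;> simp [hω]
    _ = ∫ ω, (μ⟦s | m⟧ * μ⟦t | m⟧) ω ∂μ := by
        rw [← integral_condExp hm]
        exact integral_congr_ae <| condExp_stronglyMeasurable_mul_of_bound₀ hm
          stronglyMeasurable_condExp.aestronglyMeasurable
          ((integrable_const 1).indicator ht') 1 (ae_norm_condExp_indicator_le_one s)
    _ = ∫ ω, (μ⟦s ∩ t | m⟧) ω ∂μ :=
        integral_congr_ae ((condIndep_iff m m₁ m₂ hm hm₁ hm₂ μ).mp h s t hs ht).symm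
    _ = ∫ ω in t, s.indicator (fun _ => (1 : ℝ)) ω ∂μ := by
        rw [integral_condExp hm, integral_indicator (hs'.inter ht'), setIntegral_indicator hs',
          Set.inter_comm]

/-- Contraction followed by decomposition, for a conditioning σ-algebra `m₂` refining `m`. -/
theorem ProbabilityTheory.CondIndep.condIndep_of_le {hm : m ≤ mΩ} {hm₂ : m₂ ≤ mΩ} (hle : m ≤ m₂)
    (hm₁ : m₁ ≤ mΩ) (hm₃ : m₃ ≤ mΩ) (h₁₃ : CondIndep m₂ m₁ m₃ hm₂ μ)
    (h₃₂ : CondIndep m m₃ m₂ hm μ) : CondIndep m m₁ m₃ hm μ := by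
  refine (condIndep_iff m m₁ m₃ hm hm₁ hm₃ μ).mpr fun s t hs ht => ?_
  have hst := (condIndep_iff m₂ m₁ m₃ hm₂ hm₁ hm₃ μ).mp h₁₃ s t hs ht
  have ht_coarse : μ⟦t | m₂⟧ =ᵐ[μ] μ⟦t | m⟧ :=
    condExp_indicator_eq_of_condIndep hle hm₃ hm₂ h₃₂ ht
  calc μ⟦s ∩ t | m⟧
      =ᵐ[μ] μ[μ⟦s ∩ t | m₂⟧ | m] := (condExp_condExp_of_le hle hm₂).symm
    _ =ᵐ[μ] μ[μ⟦t | m⟧ * μ⟦s | m₂⟧ | m] := by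
        refine condExp_congr_ae ?_
        filter_upwards [hst, ht_coarse] with ω hω hωt
        rw [hω, Pi.mul_apply, Pi.mul_apply, hωt, mul_comm]
    _ =ᵐ[μ] μ⟦t | m⟧ * μ[μ⟦s | m₂⟧ | m] :=
        condExp_stronglyMeasurable_mul_of_bound₀ hm
          stronglyMeasurable_condExp.aestronglyMeasurable integrable_condExp 1
          (ae_norm_condExp_indicator_le_one t)
    _ =ᵐ[μ] μ⟦s | m⟧ * μ⟦t | m⟧ := by
        filter_upwards [condExp_condExp_of_le (μ := μ) (f := s.indicator fun _ => (1 : ℝ))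
          hle hm₂] with ω hω
        rw [Pi.mul_apply, Pi.mul_apply, hω, mul_comm]

end CondIndep

theorem stmt9_general {Ω : Type*} [MeasurableSpace Ω] [StandardBorelSpace Ω]
    (μ : Measure Ω) [IsProbabilityMeasure μ] (k : ℕ) (X Y Z : Fin k → Ω → ℝ)
    (hX : ∀ i, Measurable (X i)) (hY : ∀ i, Measurable (Y i)) (hZ : ∀ i, Measurable (Z i))
    (h1 : CondIndepFun
      (MeasurableSpace.comap (fun ω => (fun i => Y i ω)) MeasurableSpace.pi)
      (Measurable.comap_le (measurable_pi_iff.mpr hY))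
      (fun ω => (fun i => X i ω)) (fun ω => (fun i => Z i ω)) μ)
    (h2 : CondIndepFun
      (MeasurableSpace.comap (fun ω => ∑ i, Y i ω) Real.measurableSpace)
      (Measurable.comap_le (Finset.measurable_sum Finset.univ (fun i _ => hY i)))
      (fun ω => ∑ i, Z i ω) (fun ω => (fun i => Y i ω)) μ) :
    CondIndepFun
      (MeasurableSpace.comap (fun ω => ∑ i, Y i ω) Real.measurableSpace)
      (Measurable.comap_le (Finset.measurable_sum Finset.univ (fun i _ => hY i)))
      (fun ω => ∑ i, X i ω) (fun ω => ∑ i, Z i ω) μ := by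
  have hsum : Measurable fun v : Fin k → ℝ => ∑ i, v i := by fun_prop
  have hSX : Measurable fun ω => ∑ i, X i ω := by fun_prop
  have hSZ : Measurable fun ω => ∑ i, Z i ω := by fun_prop
  have hSY_le_Y : MeasurableSpace.comap (fun ω => ∑ i, Y i ω) Real.measurableSpace
      ≤ MeasurableSpace.comap (fun ω i => Y i ω) MeasurableSpace.pi := by
    rw [show (fun ω => ∑ i, Y i ω) = (fun v : Fin k → ℝ => ∑ i, v i) ∘ fun ω i => Y i ω from rfl,
      ← MeasurableSpace.comap_comp]
    exact MeasurableSpace.comap_mono hsum.comap_le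
  have h1_sums := h1.comp hsum hsum
  rw [condIndepFun_iff_condIndep] at h1_sums h2 ⊢
  exact h1_sums.condIndep_of_le hSY_le_Y hSX.comap_le hSZ.comap_le h2

/-- If `(X₁,...,X_k) ⫫ (Z₁,...,Z_k) | (Y₁,...,Y_k)` and moreover
`S_Z ⫫ (Y₁,...,Y_k) | S_Y`, then `S_X ⫫ S_Z | S_Y`, where `S_X, S_Y, S_Z` are the sums. -/
theorem stmt9 {Ω : Type*} [MeasurableSpace Ω] [StandardBorelSpace Ω] [Nonempty Ω]
    (μ : Measure Ω) [IsProbabilityMeasure μ] (k : ℕ) (X Y Z : Fin k → Ω → ℝ)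
    (hX : ∀ i, Measurable (X i)) (hY : ∀ i, Measurable (Y i)) (hZ : ∀ i, Measurable (Z i))
    (h1 : CondIndepFun
      (MeasurableSpace.comap (fun ω => (fun i => Y i ω)) MeasurableSpace.pi)
      (Measurable.comap_le (measurable_pi_iff.mpr hY))
      (fun ω => (fun i => X i ω)) (fun ω => (fun i => Z i ω)) μ)
    (h2 : CondIndepFun
      (MeasurableSpace.comap (fun ω => ∑ i, Y i ω) Real.measurableSpace)
      (Measurable.comap_le (Finset.measurable_sum Finset.univ (fun i _ => hY i)))
      (fun ω => ∑ i, Z i ω) (fun ω => (fun i => Y i ω)) μ) :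
    CondIndepFun
      (MeasurableSpace.comap (fun ω => ∑ i, Y i ω) Real.measurableSpace)
      (Measurable.comap_le (Finset.measurable_sum Finset.univ (fun i _ => hY i)))
      (fun ω => ∑ i, X i ω) (fun ω => ∑ i, Z i ω) μ :=
  stmt9_general μ k X Y Z hX hY hZ h1 h2
end

section
/- Suppose Z_t = α Y_t + M_t for t = 1,...,k, where α is a real constant and (M_1,...,M_k) is independent of (Y_1,...,Y_k). Then S_Z = sum Z_t is conditionally independent of (Y_1,...,Y_k) given S_Y = sum Y_t. -/
/-!
Since `S_Z = α S_Y + ∑ M_t` is measurable with respect to `σ(S_Y) ⊔ σ(M)`, it suffices that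
`σ(S_Y) ⊔ σ(M)` is conditionally independent of `σ(Y)` given `σ(S_Y)`; this only uses `M ⊥ Y` and
`σ(S_Y) ≤ σ(Y)`. On the π-system of sets `c ∩ a` with `c ∈ σ(S_Y)`, `a ∈ σ(M)`, pull out `1_c` and
condition first on `σ(Y)`, where `1_a` becomes the constant `P(a)` by independence:
`P[c ∩ a ∩ t | S_Y] = 1_c P(a) P[t | S_Y] = P[c ∩ a | S_Y] P[t | S_Y]` for `t ∈ σ(Y)`.
-/

open MeasureTheory ProbabilityTheory MeasurableSpace Set

lemma IsPiSystem.image2_inter {α : Type*} {C D : Set (Set α)} (hC : IsPiSystem C)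
    (hD : IsPiSystem D) : IsPiSystem (image2 (· ∩ ·) C D) := by
  rintro _ ⟨s₁, hs₁, t₁, ht₁, rfl⟩ _ ⟨s₂, hs₂, t₂, ht₂, rfl⟩ hst
  rw [inter_inter_inter_comm] at hst ⊢
  exact mem_image2_of_mem (hC _ hs₁ _ hs₂ hst.left) (hD _ ht₁ _ ht₂ hst.right)

lemma MeasurableSpace.sup_eq_generateFrom_image2_inter {α : Type*} (m₁ m₂ : MeasurableSpace α) :
    m₁ ⊔ m₂ =
      generateFrom (image2 (· ∩ ·) {s | MeasurableSet[m₁] s} {s | MeasurableSet[m₂] s}) := by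
  refine le_antisymm (sup_le ?_ ?_) (generateFrom_le ?_)
  · exact fun s hs ↦ measurableSet_generateFrom ⟨s, hs, univ, .univ, inter_univ s⟩
  · exact fun s hs ↦ measurableSet_generateFrom ⟨univ, .univ, s, hs, univ_inter s⟩
  · rintro _ ⟨s, hs, t, ht, rfl⟩
    exact (le_sup_left (b := m₂) s hs).inter (le_sup_right (a := m₁) t ht)

section CondExp

variable {Ω : Type*} {m m₁ m₂ mΩ : MeasurableSpace Ω} {μ : Measure Ω}

lemma MeasureTheory.condExp_indicator_inter_of_measurableSet [IsFiniteMeasure μ] {c s : Set Ω}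
    (hc : MeasurableSet[m] c) (hs : MeasurableSet s) :
    μ⟦c ∩ s | m⟧ =ᵐ[μ] c.indicator (μ⟦s | m⟧) := by
  rw [← indicator_indicator]
  exact condExp_indicator ((integrable_const 1).indicator hs) hc

variable [IsProbabilityMeasure μ]

lemma ProbabilityTheory.Indep.condExp_indicator_eq (hindep : Indep m₁ m₂ μ) (h₁ : m₁ ≤ mΩ)
    (h₂ : m₂ ≤ mΩ) (hm : m ≤ m₂) {a : Set Ω} (ha : MeasurableSet[m₁] a) :
    μ⟦a | m⟧ =ᵐ[μ] fun _ ↦ μ.real a := by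
  refine (condExp_indep_eq h₁ (hm.trans h₂) (stronglyMeasurable_const.indicator ha)
    (indep_of_indep_of_le_right hindep hm)).trans (ae_of_all _ fun _ ↦ ?_)
  simp [integral_indicator_const _ (h₁ _ ha)]

lemma ProbabilityTheory.Indep.condExp_indicator_inter_eq (hindep : Indep m₁ m₂ μ)
    (h₁ : m₁ ≤ mΩ) (h₂ : m₂ ≤ mΩ) (hm : m ≤ m₂) {a t : Set Ω} (ha : MeasurableSet[m₁] a)
    (ht : MeasurableSet[m₂] t) :
    μ⟦a ∩ t | m⟧ =ᵐ[μ] μ.real a • μ⟦t | m⟧ := by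
  have h_inner : μ⟦t ∩ a | m₂⟧ =ᵐ[μ] μ.real a • t.indicator (fun _ ↦ (1 : ℝ)) := by
    filter_upwards [condExp_indicator_inter_of_measurableSet ht (h₁ _ ha),
      hindep.condExp_indicator_eq h₁ h₂ le_rfl ha] with ω hω hω'
    by_cases hωt : ω ∈ t <;> simp [hω, hω', hωt]
  calc μ⟦a ∩ t | m⟧ =ᵐ[μ] μ[μ⟦t ∩ a | m₂⟧ | m] := by
        rw [inter_comm]; exact (condExp_condExp_of_le hm h₂).symm
    _ =ᵐ[μ] μ[μ.real a • t.indicator (fun _ ↦ (1 : ℝ)) | m] := condExp_congr_ae h_inner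
    _ =ᵐ[μ] μ.real a • μ⟦t | m⟧ := condExp_smul _ _ _

end CondExp

theorem ProbabilityTheory.Indep.condIndep_sup_of_le {Ω : Type*} {m m₁ m₂ mΩ : MeasurableSpace Ω}
    [StandardBorelSpace Ω] {μ : Measure Ω} [IsProbabilityMeasure μ] (hindep : Indep m₁ m₂ μ)
    (h₁ : m₁ ≤ mΩ) (h₂ : m₂ ≤ mΩ) (hm : m ≤ m₂) :
    CondIndep m (m ⊔ m₁) m₂ (hm.trans h₂) μ := by
  have hmΩ := hm.trans h₂
  refine CondIndepSets.condIndep (sup_le hmΩ h₁) h₂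
    ((@isPiSystem_measurableSet Ω m).image2_inter (@isPiSystem_measurableSet Ω m₁))
    (@isPiSystem_measurableSet Ω m₂) (sup_eq_generateFrom_image2_inter m m₁)
    (@generateFrom_measurableSet Ω m₂).symm ?_
  rw [condIndepSets_iff]
  rotate_left
  · rintro _ ⟨c, hc, a, ha, rfl⟩; exact (hmΩ _ hc).inter (h₁ _ ha)
  · exact fun t ht ↦ h₂ _ ht
  rintro _ t ⟨c, hc, a, ha, rfl⟩ ht
  -- Both sides equal `c.indicator (μ.real a • μ⟦t | m⟧)`.
  filter_upwards [inter_assoc c a t ▸ condExp_indicator_inter_of_measurableSet hc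
      ((h₁ _ ha).inter (h₂ _ ht)), hindep.condExp_indicator_inter_eq h₁ h₂ hm ha ht,
    condExp_indicator_inter_of_measurableSet hc (h₁ _ ha),
    hindep.condExp_indicator_eq h₁ h₂ hm ha] with ω h_lhs h_at h_ca h_a
  by_cases hωc : ω ∈ c <;> simp [h_lhs, h_at, h_ca, h_a, hωc]

theorem ProbabilityTheory.IndepFun.condIndepFun_comp_prodMk {Ω β γ δ ε : Type*}
    {mΩ : MeasurableSpace Ω} [StandardBorelSpace Ω] {μ : Measure Ω} [IsProbabilityMeasure μ]
    [MeasurableSpace β] [mγ : MeasurableSpace γ] [mδ : MeasurableSpace δ]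
    [MeasurableSpace ε] {X : Ω → β} {Y : Ω → γ} {g : γ → δ} {h : δ × β → ε}
    (hX : Measurable X) (hY : Measurable Y) (hg : Measurable g) (hh : Measurable h)
    (hXY : IndepFun X Y μ) :
    CondIndepFun (MeasurableSpace.comap (g ∘ Y) mδ) (hg.comp hY).comap_le
      (fun ω ↦ h (g (Y ω), X ω)) Y μ := by
  have h_le : MeasurableSpace.comap (g ∘ Y) mδ ≤ MeasurableSpace.comap Y mγ := by
    rw [← comap_comp]; exact comap_mono hg.comap_le
  rw [condIndepFun_iff_condIndep]
  refine condIndep_of_condIndep_of_le_left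
    (Indep.condIndep_sup_of_le hXY hX.comap_le hY.comap_le h_le) (Measurable.comap_le ?_)
  exact hh.comp (((comap_measurable (g ∘ Y)).mono le_sup_left le_rfl).prodMk
    ((comap_measurable X).mono le_sup_right le_rfl))

theorem stmt10_general {Ω : Type*} [MeasurableSpace Ω] [StandardBorelSpace Ω]
    (μ : Measure Ω) [IsProbabilityMeasure μ] (k : ℕ) (α : ℝ) (Y M Z : Fin k → Ω → ℝ)
    (hY : ∀ i, Measurable (Y i)) (hM : ∀ i, Measurable (M i))
    (hZdef : ∀ t ω, Z t ω = α * Y t ω + M t ω)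
    (hindep : IndepFun (fun ω => (fun i => M i ω)) (fun ω => (fun i => Y i ω)) μ) :
    CondIndepFun
      (MeasurableSpace.comap (fun ω => ∑ i, Y i ω) Real.measurableSpace)
      (Measurable.comap_le (Finset.measurable_sum Finset.univ (fun i _ => hY i)))
      (fun ω => ∑ i, Z i ω) (fun ω => (fun i => Y i ω)) μ := by
  have hSZ : (fun ω ↦ ∑ i, Z i ω) = fun ω ↦ α * ∑ i, Y i ω + ∑ i, M i ω := by
    ext ω; simp only [hZdef, Finset.sum_add_distrib, Finset.mul_sum]
  rw [hSZ]
  exact hindep.condIndepFun_comp_prodMk (g := fun y ↦ ∑ i, y i)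
    (h := fun p : ℝ × (Fin k → ℝ) ↦ α * p.1 + ∑ i, p.2 i) (measurable_pi_lambda _ hM)
    (measurable_pi_lambda _ hY) (by fun_prop) (by fun_prop)

/-- If `Z_t = α Y_t + M_t` with `(M₁,...,M_k)` jointly independent of
`(Y₁,...,Y_k)`, then `S_Z = ∑ Z_t` is conditionally independent of `(Y₁,...,Y_k)`
given `S_Y = ∑ Y_t`. -/
theorem stmt10 {Ω : Type*} [MeasurableSpace Ω] [StandardBorelSpace Ω] [Nonempty Ω]
    (μ : Measure Ω) [IsProbabilityMeasure μ] (k : ℕ) (α : ℝ) (Y M Z : Fin k → Ω → ℝ)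
    (hY : ∀ i, Measurable (Y i)) (hM : ∀ i, Measurable (M i))
    (hZdef : ∀ t ω, Z t ω = α * Y t ω + M t ω)
    (hindep : IndepFun (fun ω => (fun i => M i ω)) (fun ω => (fun i => Y i ω)) μ) :
    CondIndepFun
      (MeasurableSpace.comap (fun ω => ∑ i, Y i ω) Real.measurableSpace)
      (Measurable.comap_le (Finset.measurable_sum Finset.univ (fun i _ => hY i)))
      (fun ω => ∑ i, Z i ω) (fun ω => (fun i => Y i ω)) μ :=
  stmt10_general μ k α Y M Z hY hM hZdef hindep
end

section
/- Consider the stationary Gaussian model X_1 ~ N(0, σ_N² / (1−β²)), Y_1 = α X_1 + N_{Y,1}, X_2 = β X_1 + N_{X,2}, Y_2 = α X_2 + N_{Y,2}, with N_{X,2} ~ N(0, σ_N²) and N_{Y,1}, N_{Y,2} i.i.d. N(0, σ_Y²), all noises independent of X_1 and of each other, |β| < 1. Then the partial covariance of S_X = X_1 + X_2 with Y_1 given S_Y = Y_1 + Y_2, namely Cov(S_X, Y_1) − Cov(S_X, S_Y)·Cov(Y_1, S_Y)/Var(S_Y), equals 0; the same holds with Y_2 in place of Y_1. -/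
/-!
Stationarity, `vX (1 - β²) = σN²`, gives `Var X₂ = β² vX + σN² = vX = Var X₁`. Hence `Y₁` and `Y₂`
look alike from `S_X`: `Cov(S_X, Y₁) = Cov(S_X, Y₂) = α (1 + β) vX` and
`Var Y₁ = Var Y₂ = α² vX + σY²`. For any such pair, `Cov(A, Yₖ) = Cov(A, S_Y) / 2` and
`Cov(Yₖ, S_Y) = Var S_Y / 2`, so both partial covariances vanish as soon as `Var S_Y ≠ 0`.
-/

open MeasureTheory ProbabilityTheory

/-- Covariance of two real random variables. -/
noncomputable def cov {Ω : Type*} [MeasurableSpace Ω] (μ : MeasureTheory.Measure Ω)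
    (A B : Ω → ℝ) : ℝ :=
  ∫ ω, (A ω - ∫ x, A x ∂μ) * (B ω - ∫ x, B x ∂μ) ∂μ

lemma cov_eq_covariance {Ω : Type*} [MeasurableSpace Ω] (μ : Measure Ω) (A B : Ω → ℝ) :
    cov μ A B = cov[A, B; μ] :=
  rfl

namespace ProbabilityTheory

variable {Ω : Type*} {mΩ : MeasurableSpace Ω} {μ : Measure Ω}

lemma HasLaw.variance_eq_of_gaussianReal {X : Ω → ℝ} {m : ℝ} {v : NNReal}
    (hX : HasLaw X (gaussianReal m v) μ) : Var[X; μ] = v := by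
  rw [hX.variance_eq, variance_id_gaussianReal]

lemma memLp_fun_sum_mul {ι : Type*} [Fintype ι] {W : ι → Ω → ℝ} {p : ENNReal}
    (hW : ∀ i, MemLp (W i) p μ) (a : ι → ℝ) : MemLp (fun ω => ∑ i, a i * W i ω) p μ :=
  memLp_finsetSum _ fun i _ => (hW i).const_mul (a i)

lemma covariance_fun_sum_mul_fun_sum_mul_of_pairwise_covariance_eq_zero [IsFiniteMeasure μ]
    {ι : Type*} [Fintype ι] {W : ι → Ω → ℝ} (hW : ∀ i, MemLp (W i) 2 μ)
    (huncorr : Pairwise fun i j => cov[W i, W j; μ] = 0) (a b : ι → ℝ) :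
    cov[fun ω => ∑ i, a i * W i ω, fun ω => ∑ i, b i * W i ω; μ]
      = ∑ i, a i * b i * Var[W i; μ] := by
  rw [covariance_fun_sum_fun_sum (fun i => (hW i).const_mul (a i))
    (fun j => (hW j).const_mul (b j))]
  refine Finset.sum_congr rfl fun i _ => ?_
  simp_rw [covariance_const_mul_left, covariance_const_mul_right]
  rw [Finset.sum_eq_single i (fun j _ hji => by rw [huncorr hji.symm, mul_zero, mul_zero])
    (by simp), covariance_self (hW i).aemeasurable]
  ring

lemma covariance_fun_sum_mul_fun_sum_mul_of_iIndepFun_gaussianReal [IsProbabilityMeasure μ]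
    {ι : Type*} [Fintype ι] {W : ι → Ω → ℝ} {m : ι → ℝ} {v : ι → NNReal}
    (hW : ∀ i, HasLaw (W i) (gaussianReal (m i) (v i)) μ) (hindep : iIndepFun W μ)
    (a b : ι → ℝ) :
    cov[fun ω => ∑ i, a i * W i ω, fun ω => ∑ i, b i * W i ω; μ] = ∑ i, a i * b i * v i := by
  have hL2 i : MemLp (W i) 2 μ := (hW i).hasGaussianLaw.memLp_two
  rw [covariance_fun_sum_mul_fun_sum_mul_of_pairwise_covariance_eq_zero hL2
    fun i j hij => (hindep.indepFun hij).covariance_eq_zero (hL2 i) (hL2 j)]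
  simp only [(hW _).variance_eq_of_gaussianReal]

lemma covariance_sub_mul_div_variance_eq_zero_of_exchangeable [IsFiniteMeasure μ]
    {A Y₁ Y₂ : Ω → ℝ} (hA : MemLp A 2 μ) (hY₁ : MemLp Y₁ 2 μ) (hY₂ : MemLp Y₂ 2 μ)
    (hAY : cov[A, Y₁; μ] = cov[A, Y₂; μ]) (hY : Var[Y₁; μ] = Var[Y₂; μ])
    (hS : Var[fun ω => Y₁ ω + Y₂ ω; μ] ≠ 0) :
    (cov[A, Y₁; μ] - cov[A, fun ω => Y₁ ω + Y₂ ω; μ] * cov[Y₁, fun ω => Y₁ ω + Y₂ ω; μ] /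
        Var[fun ω => Y₁ ω + Y₂ ω; μ] = 0) ∧
      (cov[A, Y₂; μ] - cov[A, fun ω => Y₁ ω + Y₂ ω; μ] * cov[Y₂, fun ω => Y₁ ω + Y₂ ω; μ] /
        Var[fun ω => Y₁ ω + Y₂ ω; μ] = 0) := by
  rw [show (fun ω => Y₁ ω + Y₂ ω) = Y₁ + Y₂ from rfl] at hS ⊢
  have hVarS : Var[Y₁ + Y₂; μ] = 2 * (Var[Y₁; μ] + cov[Y₁, Y₂; μ]) := by
    rw [variance_add hY₁ hY₂, ← hY]; ring
  have hAY₁ : cov[A, Y₁; μ] = cov[A, Y₁ + Y₂; μ] / 2 := by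
    rw [covariance_add_right hA hY₁ hY₂, ← hAY]; ring
  have hAY₂ : cov[A, Y₂; μ] = cov[A, Y₁ + Y₂; μ] / 2 := by
    rw [covariance_add_right hA hY₁ hY₂, hAY]; ring
  have hY₁S : cov[Y₁, Y₁ + Y₂; μ] = Var[Y₁ + Y₂; μ] / 2 := by
    rw [covariance_add_right hY₁ hY₁ hY₂, covariance_self hY₁.aemeasurable, hVarS]; ring
  have hY₂S : cov[Y₂, Y₁ + Y₂; μ] = Var[Y₁ + Y₂; μ] / 2 := by
    rw [covariance_add_right hY₂ hY₁ hY₂, covariance_self hY₂.aemeasurable, covariance_comm,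
      hVarS, hY]; ring
  rw [hAY₁, hAY₂, hY₁S, hY₂S]
  constructor <;> field_simp <;> ring

end ProbabilityTheory

theorem stmt13_general {Ω : Type*} [MeasurableSpace Ω] (μ : Measure Ω) [IsProbabilityMeasure μ]
    (α β : ℝ) (σN σY : NNReal) (hσY : 0 < σY)
    (vX : NNReal) (hvX : (vX : ℝ) * (1 - β ^ 2) = (σN : ℝ) ^ 2)
    (X₁ X₂ Y₁ Y₂ NX₂ NY₁ NY₂ : Ω → ℝ)
    (hX₁m : Measurable X₁) (hNX₂m : Measurable NX₂)
    (hNY₁m : Measurable NY₁) (hNY₂m : Measurable NY₂)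
    (hX₁d : Measure.map X₁ μ = gaussianReal 0 vX)
    (hNX₂d : Measure.map NX₂ μ = gaussianReal 0 (σN ^ 2))
    (hNY₁d : Measure.map NY₁ μ = gaussianReal 0 (σY ^ 2))
    (hNY₂d : Measure.map NY₂ μ = gaussianReal 0 (σY ^ 2))
    (hindep : iIndepFun ![X₁, NX₂, NY₁, NY₂] μ)
    (hY₁ : ∀ ω, Y₁ ω = α * X₁ ω + NY₁ ω)
    (hX₂ : ∀ ω, X₂ ω = β * X₁ ω + NX₂ ω)
    (hY₂ : ∀ ω, Y₂ ω = α * X₂ ω + NY₂ ω) :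
    (cov μ (fun ω => X₁ ω + X₂ ω) Y₁ -
      cov μ (fun ω => X₁ ω + X₂ ω) (fun ω => Y₁ ω + Y₂ ω) *
        cov μ Y₁ (fun ω => Y₁ ω + Y₂ ω) / variance (fun ω => Y₁ ω + Y₂ ω) μ = 0) ∧
    (cov μ (fun ω => X₁ ω + X₂ ω) Y₂ -
      cov μ (fun ω => X₁ ω + X₂ ω) (fun ω => Y₁ ω + Y₂ ω) *
        cov μ Y₂ (fun ω => Y₁ ω + Y₂ ω) / variance (fun ω => Y₁ ω + Y₂ ω) μ = 0) := by
  set W : Fin 4 → Ω → ℝ := ![X₁, NX₂, NY₁, NY₂]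
  have hlaw : ∀ i, HasLaw (W i) (gaussianReal 0 (![vX, σN ^ 2, σY ^ 2, σY ^ 2] i)) μ := by
    intro i
    fin_cases i
    exacts [⟨hX₁m.aemeasurable, hX₁d⟩, ⟨hNX₂m.aemeasurable, hNX₂d⟩,
      ⟨hNY₁m.aemeasurable, hNY₁d⟩, ⟨hNY₂m.aemeasurable, hNY₂d⟩]
  have hW : ∀ i, MemLp (W i) 2 μ := fun i => (hlaw i).hasGaussianLaw.memLp_two
  have hcov (a₀ a₁ a₂ a₃ b₀ b₁ b₂ b₃ : ℝ) :
      cov[fun ω => ∑ i, ![a₀, a₁, a₂, a₃] i * W i ω, fun ω => ∑ i, ![b₀, b₁, b₂, b₃] i * W i ω; μ]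
        = a₀ * b₀ * vX + a₁ * b₁ * σN ^ 2 + (a₂ * b₂ + a₃ * b₃) * σY ^ 2 := by
    rw [covariance_fun_sum_mul_fun_sum_mul_of_iIndepFun_gaussianReal hlaw hindep,
      Fin.sum_univ_four]
    simp only [Matrix.cons_val, NNReal.coe_pow]
    ring
  have hvar (a₀ a₁ a₂ a₃ : ℝ) : Var[fun ω => ∑ i, ![a₀, a₁, a₂, a₃] i * W i ω; μ]
      = a₀ ^ 2 * vX + a₁ ^ 2 * σN ^ 2 + (a₂ ^ 2 + a₃ ^ 2) * σY ^ 2 := by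
    rw [← covariance_self (memLp_fun_sum_mul hW _).aemeasurable, hcov]
    ring
  have hSX : (fun ω => X₁ ω + X₂ ω) = fun ω => ∑ i, ![1 + β, 1, 0, 0] i * W i ω := by
    ext ω; simp only [W, Fin.sum_univ_four, Matrix.cons_val, hX₂]; ring
  have hY1 : Y₁ = fun ω => ∑ i, ![α, 0, 1, 0] i * W i ω := by
    ext ω; simp only [W, Fin.sum_univ_four, Matrix.cons_val, hY₁]; ring
  have hY2 : Y₂ = fun ω => ∑ i, ![α * β, α, 0, 1] i * W i ω := by
    ext ω; simp only [W, Fin.sum_univ_four, Matrix.cons_val, hY₂, hX₂]; ring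
  simp only [cov_eq_covariance]
  rw [hSX, hY1, hY2]
  refine covariance_sub_mul_div_variance_eq_zero_of_exchangeable (memLp_fun_sum_mul hW _)
    (memLp_fun_sum_mul hW _) (memLp_fun_sum_mul hW _) ?_ ?_ ?_
  · rw [hcov, hcov]; linear_combination α * hvX
  · rw [hvar, hvar]; linear_combination α ^ 2 * hvX
  · rw [variance_fun_add (memLp_fun_sum_mul hW _) (memLp_fun_sum_mul hW _), hvar, hvar, hcov]
    have hσY' : (0 : ℝ) < σY := hσY
    nlinarith [mul_nonneg (sq_nonneg (α * (1 + β))) vX.coe_nonneg, sq_nonneg (α * σN)]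

/-- In the stationary Gaussian model `X₁ ~ N(0, σ_N²/(1−β²))`,
`Y₁ = α X₁ + N_{Y,1}`, `X₂ = β X₁ + N_{X,2}`, `Y₂ = α X₂ + N_{Y,2}`, with independent Gaussian
noises and `|β| < 1`, the partial covariance of `S_X = X₁ + X₂` with `Y₁` given
`S_Y = Y₁ + Y₂` is zero, and likewise with `Y₂` in place of `Y₁`. -/
theorem stmt13 {Ω : Type*} [MeasurableSpace Ω] (μ : Measure Ω) [IsProbabilityMeasure μ]
    (α β : ℝ) (hβ : |β| < 1) (σN σY : NNReal) (hσN : 0 < σN) (hσY : 0 < σY)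
    (vX : NNReal) (hvX : (vX : ℝ) * (1 - β ^ 2) = (σN : ℝ) ^ 2)
    (X₁ X₂ Y₁ Y₂ NX₂ NY₁ NY₂ : Ω → ℝ)
    (hX₁m : Measurable X₁) (hNX₂m : Measurable NX₂)
    (hNY₁m : Measurable NY₁) (hNY₂m : Measurable NY₂)
    (hX₁d : Measure.map X₁ μ = gaussianReal 0 vX)
    (hNX₂d : Measure.map NX₂ μ = gaussianReal 0 (σN ^ 2))
    (hNY₁d : Measure.map NY₁ μ = gaussianReal 0 (σY ^ 2))
    (hNY₂d : Measure.map NY₂ μ = gaussianReal 0 (σY ^ 2))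
    (hindep : iIndepFun ![X₁, NX₂, NY₁, NY₂] μ)
    (hY₁ : ∀ ω, Y₁ ω = α * X₁ ω + NY₁ ω)
    (hX₂ : ∀ ω, X₂ ω = β * X₁ ω + NX₂ ω)
    (hY₂ : ∀ ω, Y₂ ω = α * X₂ ω + NY₂ ω) :
    (cov μ (fun ω => X₁ ω + X₂ ω) Y₁ -
      cov μ (fun ω => X₁ ω + X₂ ω) (fun ω => Y₁ ω + Y₂ ω) *
        cov μ Y₁ (fun ω => Y₁ ω + Y₂ ω) / variance (fun ω => Y₁ ω + Y₂ ω) μ = 0) ∧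
    (cov μ (fun ω => X₁ ω + X₂ ω) Y₂ -
      cov μ (fun ω => X₁ ω + X₂ ω) (fun ω => Y₁ ω + Y₂ ω) *
        cov μ Y₂ (fun ω => Y₁ ω + Y₂ ω) / variance (fun ω => Y₁ ω + Y₂ ω) μ = 0) :=
  stmt13_general μ α β σN σY hσY vX hvX X₁ X₂ Y₁ Y₂ NX₂ NY₁ NY₂ hX₁m hNX₂m hNY₁m hNY₂m hX₁d hNX₂d
    hNY₁d hNY₂d hindep hY₁ hX₂ hY₂
end

section
/- Let N_0, N_1, N_2, ... be i.i.d. s-dimensional random vectors with zero mean and finite variance, and let B be an s×s matrix with operator norm ‖B‖ < 1. Define X_0 = N_0, X_t = B X_{t−1} + N_t, and Y_t = (I − B)^{−1} N_t. If g(k) > 0 and g(k) → ∞, then (1/g(k)) sum_{t=1}^k Y_t − (1/g(k)) sum_{t=1}^k X_t converges to 0 in probability as k → ∞. -/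
/-!
Summing the two recursions gives `(I - B) (∑ Y - ∑ X) = B (X k - X 0)`, so the difference of the
partial sums is the fixed operator `(I - B)⁻¹ B` applied to `X k - X 0`. Since the innovations are
identically distributed and in `L²`, the recursion `X (t + 1) = B (X t) + N (t + 1)` keeps `X k`
bounded in `L²` by `‖N 0‖₂ / (1 - ‖B‖)`. Dividing by `g k → ∞` therefore sends the difference to
`0` in `L²`, hence in measure.
-/

open MeasureTheory ProbabilityTheory Filter
open scoped ENNReal Topology

theorem ENNReal.le_mul_inv_one_sub_of_le_mul_add {u : ℕ → ℝ≥0∞} {b K : ℝ≥0∞} (h0 : u 0 ≤ K)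
    (hstep : ∀ k, u (k + 1) ≤ b * u k + K) (k : ℕ) : u k ≤ K * (1 - b)⁻¹ := by
  -- `K * (1 - b)⁻¹ = K * ∑ bⁿ` is a fixed point of `x ↦ b * x + K`, for every `b`
  have hfix : b * (K * (1 - b)⁻¹) + K = K * (1 - b)⁻¹ := by
    have h : (1 - b)⁻¹ = 1 + b * (1 - b)⁻¹ := by
      rw [← ENNReal.tsum_geometric_add_one, ← ENNReal.tsum_geometric,
        tsum_eq_zero_add' ENNReal.summable, pow_zero]
    conv_rhs => rw [h]
    ring
  induction k with
  | zero => exact h0.trans (le_mul_of_one_le_right' (ENNReal.one_le_inv.2 tsub_le_self))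
  | succ k ih => exact (hstep k).trans (hfix ▸ by gcongr)

section Deterministic

variable {E F : Type*} [AddCommGroup E] [FunLike F E E] [AddMonoidHomClass F E E]

theorem sum_Icc_sub_sum_Icc_sub_map_eq {B : F} {N X Y : ℕ → E}
    (hXrec : ∀ t, X (t + 1) = B (X t) + N (t + 1)) (hYfix : ∀ t, Y t = B (Y t) + N t) (k : ℕ) :
    (∑ t ∈ Finset.Icc 1 k, Y t - ∑ t ∈ Finset.Icc 1 k, X t)
      - B (∑ t ∈ Finset.Icc 1 k, Y t - ∑ t ∈ Finset.Icc 1 k, X t) = B (X k - X 0) := by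
  induction k with
  | zero => simp
  | succ k ih =>
    have regroup : ∀ d e y x : E, (d + y - (e + x)) - B (d + y - (e + x))
        = ((d - e) - B (d - e)) + (y - B y) - (x - B x) := by
      intros; simp only [map_sub, map_add]; abel
    rw [Finset.sum_Icc_succ_top (Nat.le_add_left 1 k),
      Finset.sum_Icc_succ_top (Nat.le_add_left 1 k), regroup, ih, sub_eq_of_eq_add' (hYfix _),
      hXrec k]
    simp only [map_sub, map_add]
    abel

end Deterministic

section Banach

variable {𝕜 E : Type*} [NontriviallyNormedField 𝕜] [NormedAddCommGroup E] [NormedSpace 𝕜 E]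
  [CompleteSpace E]

theorem sum_Icc_sub_sum_Icc_eq_oneSub_inv {B : E →L[𝕜] E} (hB : ‖B‖ < 1) {N X Y : ℕ → E}
    (hXrec : ∀ t, X (t + 1) = B (X t) + N (t + 1)) (hYfix : ∀ t, Y t = B (Y t) + N t) (k : ℕ) :
    ∑ t ∈ Finset.Icc 1 k, Y t - ∑ t ∈ Finset.Icc 1 k, X t
      = (↑(Units.oneSub B hB)⁻¹ * B) (X k - X 0) := by
  set D := ∑ t ∈ Finset.Icc 1 k, Y t - ∑ t ∈ Finset.Icc 1 k, X t
  have hD : (Units.oneSub B hB : E →L[𝕜] E) D = B (X k - X 0) := by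
    rw [Units.val_oneSub, sub_apply, one_apply_eq_self]
    exact sum_Icc_sub_sum_Icc_sub_map_eq hXrec hYfix k
  rw [mul_apply_eq_comp, ← hD, ← mul_apply_eq_comp, Units.inv_mul, one_apply_eq_self]

end Banach

section Lp

variable {Ω 𝕜 E : Type*} [MeasurableSpace Ω] {μ : Measure Ω} [NontriviallyNormedField 𝕜]
  [NormedAddCommGroup E] [NormedSpace 𝕜 E] {p : ℝ≥0∞}

theorem ContinuousLinearMap.eLpNorm_comp_le {F : Type*} [NormedAddCommGroup F] [NormedSpace 𝕜 F]
    (L : E →L[𝕜] F) (f : Ω → E) :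
    eLpNorm (fun ω => L (f ω)) p μ ≤ ‖L‖ₑ * eLpNorm f p μ :=
  eLpNorm_le_mul_eLpNorm_of_ae_le_mul' (ae_of_all _ fun ω => L.le_opENorm (f ω)) p

theorem aestronglyMeasurable_orbit {B : E →L[𝕜] E} {N X : ℕ → Ω → E}
    (hN : ∀ t, AEStronglyMeasurable (N t) μ) (hX0 : ∀ ω, X 0 ω = N 0 ω)
    (hXrec : ∀ t ω, X (t + 1) ω = B (X t ω) + N (t + 1) ω) (k : ℕ) :
    AEStronglyMeasurable (X k) μ := by
  induction k with
  | zero => exact (funext hX0) ▸ hN 0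
  | succ k ih => exact (funext (hXrec k)) ▸ (B.continuous.comp_aestronglyMeasurable ih).add (hN _)

theorem eLpNorm_orbit_le {B : E →L[𝕜] E} {N X : ℕ → Ω → E} (hp : 1 ≤ p) {K : ℝ≥0∞}
    (hN : ∀ t, AEStronglyMeasurable (N t) μ) (hNK : ∀ t, eLpNorm (N t) p μ ≤ K)
    (hX0 : ∀ ω, X 0 ω = N 0 ω) (hXrec : ∀ t ω, X (t + 1) ω = B (X t ω) + N (t + 1) ω) (k : ℕ) :
    eLpNorm (X k) p μ ≤ K * (1 - ‖B‖ₑ)⁻¹ := by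
  refine ENNReal.le_mul_inv_one_sub_of_le_mul_add (u := fun k => eLpNorm (X k) p μ)
    ((funext hX0) ▸ hNK 0) (fun k => ?_) k
  rw [show X (k + 1) = (fun ω => B (X k ω)) + N (k + 1) from funext (hXrec k)]
  calc eLpNorm ((fun ω => B (X k ω)) + N (k + 1)) p μ
      ≤ eLpNorm (fun ω => B (X k ω)) p μ + eLpNorm (N (k + 1)) p μ :=
        eLpNorm_add_le (B.continuous.comp_aestronglyMeasurable
          (aestronglyMeasurable_orbit hN hX0 hXrec k)) (hN _) hp
    _ ≤ ‖B‖ₑ * eLpNorm (X k) p μ + K := add_le_add (B.eLpNorm_comp_le _) (hNK _)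

theorem tendstoInMeasure_smul_of_eLpNorm_le {ι : Type*} {l : Filter ι} (hp : p ≠ 0) {c : ι → 𝕜}
    (hc : Tendsto c l (𝓝 0)) {f : ι → Ω → E} (hf : ∀ i, AEStronglyMeasurable (f i) μ)
    {K : ℝ≥0∞} (hK : K ≠ ∞) (hfK : ∀ i, eLpNorm (f i) p μ ≤ K) :
    TendstoInMeasure μ (fun i ω => c i • f i ω) l (fun _ => 0) := by
  refine tendstoInMeasure_of_tendsto_eLpNorm hp (fun i => (hf i).const_smul (c i))
    aestronglyMeasurable_const ?_
  have hcK : Tendsto (fun i => ‖c i‖ₑ * K) l (𝓝 0) := by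
    simpa using ENNReal.Tendsto.mul_const
      ((continuous_enorm.tendsto' _ _ enorm_zero).comp hc) (Or.inr hK)
  refine tendsto_of_tendsto_of_tendsto_of_le_of_le tendsto_const_nhds hcK (fun _ => zero_le)
    fun i => ?_
  rw [← Pi.zero_def, sub_zero]
  exact (eLpNorm_const_smul (c i) (f i) p μ).trans_le (by gcongr; exact hfK i)

end Lp

theorem stmt14_general {Ω : Type*} [MeasurableSpace Ω] (μ : Measure Ω)
    (s : ℕ) (B : EuclideanSpace ℝ (Fin s) →L[ℝ] EuclideanSpace ℝ (Fin s)) (hB : ‖B‖ < 1)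
    (N X Y : ℕ → Ω → EuclideanSpace ℝ (Fin s))
    (hNident : ∀ t, Measure.map (N t) μ = Measure.map (N 0) μ)
    (hNvar : ∀ t, MemLp (N t) 2 μ)
    (hX0 : ∀ ω, X 0 ω = N 0 ω)
    (hXrec : ∀ t ω, X (t + 1) ω = B (X t ω) + N (t + 1) ω)
    (hYfix : ∀ t ω, Y t ω = B (Y t ω) + N t ω)
    (g : ℕ → ℝ) (hg : Tendsto g atTop atTop) :
    TendstoInMeasure μ
      (fun k ω => (g k)⁻¹ • ((∑ t ∈ Finset.Icc 1 k, Y t ω) - ∑ t ∈ Finset.Icc 1 k, X t ω))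
      atTop (fun _ => 0) := by
  have hN t : AEStronglyMeasurable (N t) μ := (hNvar t).1
  have hNK t : eLpNorm (N t) 2 μ ≤ eLpNorm (N 0) 2 μ :=
    (IdentDistrib.eLpNorm_eq ⟨(hN t).aemeasurable, (hN 0).aemeasurable, hNident t⟩ 2).le
  set T := ↑(Units.oneSub B hB)⁻¹ * B
  set M := eLpNorm (N 0) 2 μ * (1 - ‖B‖ₑ)⁻¹
  have hB' : ‖B‖ₑ < 1 := by rw [← ofReal_norm]; exact ENNReal.ofReal_lt_one.2 hB
  have hM : M ≠ ∞ :=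
    ENNReal.mul_ne_top (hNvar 0).2.ne (ENNReal.inv_ne_top.2 (tsub_pos_of_lt hB').ne')
  have hX := aestronglyMeasurable_orbit hN hX0 hXrec
  have hXK := eLpNorm_orbit_le one_le_two hN hNK hX0 hXrec
  have hD k ω : ∑ t ∈ Finset.Icc 1 k, Y t ω - ∑ t ∈ Finset.Icc 1 k, X t ω = T (X k ω - X 0 ω) :=
    sum_Icc_sub_sum_Icc_eq_oneSub_inv hB (N := (N · ω)) (hXrec · ω) (hYfix · ω) k
  simp_rw [hD]
  refine tendstoInMeasure_smul_of_eLpNorm_le two_ne_zero hg.inv_tendsto_atTop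
    (fun k => T.continuous.comp_aestronglyMeasurable ((hX k).sub (hX 0)))
    (K := ‖T‖ₑ * (M + M)) (by finiteness) fun k => ?_
  calc eLpNorm (fun ω => T (X k ω - X 0 ω)) 2 μ ≤ ‖T‖ₑ * eLpNorm (X k - X 0) 2 μ :=
        T.eLpNorm_comp_le _
    _ ≤ ‖T‖ₑ * (M + M) := by
        gcongr
        exact (eLpNorm_sub_le (hX k) (hX 0) one_le_two).trans (add_le_add (hXK k) (hXK 0))

/-- Let `N₀, N₁, ...` be i.i.d. `s`-dimensional random vectors with zero mean
and finite variance, `B` an operator with `‖B‖ < 1`. With `X₀ = N₀`, `X_t = B X_{t-1} + N_t`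
and `Y_t = B Y_t + N_t` (the instantaneous fixed point, i.e. `Y_t = (I−B)⁻¹ N_t`), if
`g k > 0` and `g k → ∞`, then `(1/g k) ∑_{t=1}^k Y_t − (1/g k) ∑_{t=1}^k X_t → 0`
in probability as `k → ∞`. -/
theorem stmt14 {Ω : Type*} [MeasurableSpace Ω] (μ : Measure Ω) [IsProbabilityMeasure μ]
    (s : ℕ) (B : EuclideanSpace ℝ (Fin s) →L[ℝ] EuclideanSpace ℝ (Fin s)) (hB : ‖B‖ < 1)
    (N X Y : ℕ → Ω → EuclideanSpace ℝ (Fin s))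
    (hNmeas : ∀ t, Measurable (N t))
    (hNindep : iIndepFun N μ)
    (hNident : ∀ t, Measure.map (N t) μ = Measure.map (N 0) μ)
    (hNmean : ∀ t, ∫ ω, N t ω ∂μ = 0)
    (hNvar : ∀ t, MemLp (N t) 2 μ)
    (hX0 : ∀ ω, X 0 ω = N 0 ω)
    (hXrec : ∀ t ω, X (t + 1) ω = B (X t ω) + N (t + 1) ω)
    (hYfix : ∀ t ω, Y t ω = B (Y t ω) + N t ω)
    (g : ℕ → ℝ) (hgpos : ∀ k, 0 < g k) (hg : Tendsto g atTop atTop) :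
    TendstoInMeasure μ
      (fun k ω => (g k)⁻¹ • ((∑ t ∈ Finset.Icc 1 k, Y t ω) - ∑ t ∈ Finset.Icc 1 k, X t ω))
      atTop (fun _ => 0) :=
  stmt14_general μ s B hB N X Y hNident hNvar hX0 hXrec hYfix g hg
end

section
/- Let B be an s×s matrix with ‖B‖ < 1 and let N_0,...,N_k be vectors. Then ‖ sum_{t=1}^k ((I−B)^{−1} N_t) − sum_{t=1}^k X_t ‖ ≤ (1/(1−‖B‖)) ( sum_{t=1}^k ‖B‖^{k−t+1} ‖N_t‖ + (‖B‖ − ‖B‖^{k+1}) ‖N_0‖ ), where X_t = sum_{i=0}^t B^{t−i} N_i. -/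
/-!
Exchanging the order of summation gives
`∑_{t=1}^k X_t = ∑_{t=1}^k S_{k-t} N_t + (B + ⋯ + B^k) N_0` with `S_m = I + B + ⋯ + B^m`.
Now `(I - B)⁻¹ - S_m = ∑_{i > m} B^i` is a tail of the Neumann series, of norm at most
`‖B‖^{m+1} / (1 - ‖B‖)`, while `‖B + ⋯ + B^k‖ ≤ ‖B‖ + ⋯ + ‖B‖^k = (‖B‖ - ‖B‖^{k+1}) / (1 - ‖B‖)`.
-/

open Finset

section NormedRing

variable {R : Type*} [NormedRing R] {x : R}

theorem norm_inverse_one_sub_sub_geom_sum_le [HasSummableGeomSeries R] (hx : ‖x‖ < 1)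
    {m : ℕ} (hm : 0 < m) :
    ‖Ring.inverse (1 - x) - ∑ i ∈ range m, x ^ i‖ ≤ ‖x‖ ^ m / (1 - ‖x‖) := by
  have hsum : Summable (x ^ ·) := summable_geometric_of_norm_lt_one hx
  rw [← geom_series_eq_inverse x hx, ← hsum.sum_add_tsum_nat_add m, add_sub_cancel_left]
  refine tsum_of_norm_bounded ?_ fun i => norm_pow_le' x (by omega : 0 < i + m)
  simpa only [pow_add, div_eq_mul_inv, mul_comm] using
    (hasSum_geometric_of_lt_one (norm_nonneg x) hx).mul_left (‖x‖ ^ m)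

theorem norm_sum_Icc_pow_le (hx : ‖x‖ < 1) {m n : ℕ} (hm : 0 < m) (hmn : m ≤ n + 1) :
    ‖∑ i ∈ Icc m n, x ^ i‖ ≤ (‖x‖ ^ m - ‖x‖ ^ (n + 1)) / (1 - ‖x‖) := by
  rw [← Ico_add_one_right_eq_Icc, ← geom_sum_Ico' hx.ne hmn]
  exact (norm_sum_le _ _).trans <| sum_le_sum fun i hi => norm_pow_le' x (by
    have := (mem_Ico.1 hi).1; omega)

end NormedRing

theorem Finset.sum_range_succ_eq_add_sum_Icc {M : Type*} [AddCommMonoid M] (f : ℕ → M) (n : ℕ) :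
    ∑ i ∈ range (n + 1), f i = f 0 + ∑ i ∈ Icc 1 n, f i := by
  rw [sum_range_eq_add_Ico f (by omega : 0 < n + 1), Ico_add_one_right_eq_Icc]

namespace ContinuousLinearMap

variable {𝕜 E : Type*} [NontriviallyNormedField 𝕜] [NormedAddCommGroup E] [NormedSpace 𝕜 E]

theorem sum_range_sum_range_pow_sub_apply (B : E →L[𝕜] E) (N : ℕ → E) (n : ℕ) :
    ∑ t ∈ range (n + 1), ∑ i ∈ range (t + 1), (B ^ (t - i)) (N i) =
      ∑ i ∈ range (n + 1), (∑ j ∈ range (n - i + 1), B ^ j) (N i) := by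
  simp only [_root_.sum_apply]
  rw [sum_range_diag_flip (n + 1) fun i j => (B ^ j) (N i)]
  refine sum_congr rfl fun i hi => ?_
  rw [Nat.sub_add_comm (mem_range_succ_iff.1 hi)]

theorem sum_Icc_sum_range_pow_sub_apply (B : E →L[𝕜] E) (N : ℕ → E) (n : ℕ) :
    ∑ t ∈ Icc 1 n, ∑ i ∈ range (t + 1), (B ^ (t - i)) (N i) =
      ∑ t ∈ Icc 1 n, (∑ j ∈ range (n - t + 1), B ^ j) (N t) + (∑ j ∈ Icc 1 n, B ^ j) (N 0) := by
  have h := B.sum_range_sum_range_pow_sub_apply N n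
  rw [sum_range_succ_eq_add_sum_Icc _ n, sum_range_succ_eq_add_sum_Icc _ n, Nat.sub_zero,
    sum_range_succ_eq_add_sum_Icc _ n, pow_zero, add_apply, one_apply_eq_self, add_assoc] at h
  simp only [zero_add, range_one, sum_singleton, Nat.sub_self, pow_zero, one_apply_eq_self,
    add_right_inj] at h
  rw [h, add_comm]

end ContinuousLinearMap

/-- For `‖B‖ < 1` and vectors `N₀,...,N_k`, with
`X_t = ∑_{i=0}^t B^{t−i} N_i`, one has
`‖∑_{t=1}^k (I−B)⁻¹ N_t − ∑_{t=1}^k X_t‖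
  ≤ (1/(1−‖B‖)) (∑_{t=1}^k ‖B‖^{k−t+1} ‖N_t‖ + (‖B‖ − ‖B‖^{k+1}) ‖N₀‖)`. -/
theorem stmt16 (s : ℕ) (B : EuclideanSpace ℝ (Fin s) →L[ℝ] EuclideanSpace ℝ (Fin s))
    (hB : ‖B‖ < 1) (k : ℕ) (N X : ℕ → EuclideanSpace ℝ (Fin s))
    (hX : ∀ t, X t = ∑ i ∈ Finset.range (t + 1), (B ^ (t - i)) (N i)) :
    ‖(∑ t ∈ Finset.Icc 1 k, Ring.inverse (1 - B) (N t)) - ∑ t ∈ Finset.Icc 1 k, X t‖ ≤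
      (1 / (1 - ‖B‖)) *
        ((∑ t ∈ Finset.Icc 1 k, ‖B‖ ^ (k - t + 1) * ‖N t‖) +
          (‖B‖ - ‖B‖ ^ (k + 1)) * ‖N 0‖) := by
  have hdiff : (∑ t ∈ Icc 1 k, Ring.inverse (1 - B) (N t)) - ∑ t ∈ Icc 1 k, X t =
      ∑ t ∈ Icc 1 k, (Ring.inverse (1 - B) - ∑ j ∈ range (k - t + 1), B ^ j) (N t) -
        (∑ j ∈ Icc 1 k, B ^ j) (N 0) := by
    rw [sum_congr rfl fun t _ => hX t, B.sum_Icc_sum_range_pow_sub_apply]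
    simp only [sub_apply, sum_sub_distrib]
    abel
  have htail : ∀ t ∈ Icc 1 k,
      ‖(Ring.inverse (1 - B) - ∑ j ∈ range (k - t + 1), B ^ j) (N t)‖ ≤
        1 / (1 - ‖B‖) * (‖B‖ ^ (k - t + 1) * ‖N t‖) := fun t _ =>
    (ContinuousLinearMap.le_of_opNorm_le _ (norm_inverse_one_sub_sub_geom_sum_le hB (by omega)) _).trans_eq
      (by ring)
  have hhead : ‖(∑ j ∈ Icc 1 k, B ^ j) (N 0)‖ ≤ 1 / (1 - ‖B‖) * ((‖B‖ - ‖B‖ ^ (k + 1)) * ‖N 0‖) :=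
    (ContinuousLinearMap.le_of_opNorm_le _
      (by simpa only [pow_one] using norm_sum_Icc_pow_le (m := 1) hB one_pos (by omega)) _).trans_eq
      (by ring)
  rw [hdiff, mul_add, mul_sum]
  exact (norm_sub_le _ _).trans (add_le_add ((norm_sum_le _ _).trans (sum_le_sum htail)) hhead)
end
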